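/- For all real numbers a, b, m and all s > 0, the integral of x ↦ erf(a·x + b) against the Gaussian measure on ℝ with mean m and variance s² equals erf( (a·m + b) / √(1 + 2·a²·s²) ). -/

import Mathlib

/-! Let `X ∼ N(μ, v)`. Differentiating under the integral, `μ ↦ E[erf X]` has derivative
`(2/√π) E[exp(-X²)]`, and completing the square in the Gaussian density gives
`E[exp(-X²)] = exp(-μ²/(1+2v)) / √(1+2v)`, which is also the derivative of `μ ↦ erf(μ/√(1+2v))`.
Both functions vanish at `μ = 0`, because `erf` is odd and `N(0, v)` is symmetric, so they
coincide. The theorem is the case of the image of `N(m, s²)` under `x ↦ a x + b`, which is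
`N(a m + b, a² s²)`. -/

open MeasureTheory ProbabilityTheory Real

open scoped NNReal

noncomputable def erf (x : ℝ) : ℝ := 2 / Real.sqrt Real.pi * ∫ t in (0:ℝ)..x, Real.exp (-t ^ 2)

lemma continuous_exp_neg_sq : Continuous fun t : ℝ => exp (-t ^ 2) := by fun_prop

lemma hasDerivAt_erf (x : ℝ) : HasDerivAt erf (2 / √π * exp (-x ^ 2)) x :=
  (intervalIntegral.integral_hasDerivAt_right (continuous_exp_neg_sq.intervalIntegrable 0 x)
    (continuous_exp_neg_sq.stronglyMeasurableAtFilter _ _)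
    continuous_exp_neg_sq.continuousAt).const_mul _

lemma continuous_erf : Continuous erf :=
  continuous_iff_continuousAt.2 fun x => (hasDerivAt_erf x).continuousAt

lemma erf_neg (x : ℝ) : erf (-x) = -erf x := by
  have h := intervalIntegral.integral_comp_neg (a := 0) (b := -x) fun t => exp (-t ^ 2)
  simp only [neg_neg, neg_zero, even_two, Even.neg_pow] at h
  rw [erf, erf, h, intervalIntegral.integral_symm]
  ring

lemma erf_nonneg {x : ℝ} (hx : 0 ≤ x) : 0 ≤ erf x :=
  mul_nonneg (by positivity) (intervalIntegral.integral_nonneg hx fun _ _ => (exp_pos _).le)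

lemma intervalIntegral_exp_neg_sq_le {x : ℝ} (hx : 0 ≤ x) :
    ∫ t in (0:ℝ)..x, exp (-t ^ 2) ≤ √π / 2 := by
  have hint : IntegrableOn (fun t : ℝ => exp (-t ^ 2)) (Set.Ioi 0) := by
    simpa using (integrable_exp_neg_mul_sq one_pos).integrableOn
  calc ∫ t in (0:ℝ)..x, exp (-t ^ 2) = ∫ t in Set.Ioc 0 x, exp (-t ^ 2) :=
        intervalIntegral.integral_of_le hx
    _ ≤ ∫ t in Set.Ioi 0, exp (-t ^ 2) :=
        setIntegral_mono_set hint (.of_forall fun t => (exp_pos _).le)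
          (.of_forall fun _ ht => ht.1)
    _ = √π / 2 := by simpa using integral_gaussian_Ioi 1

lemma erf_le_one (x : ℝ) : erf x ≤ 1 := by
  rcases le_or_gt 0 x with hx | hx
  · calc erf x ≤ 2 / √π * (√π / 2) :=
          mul_le_mul_of_nonneg_left (intervalIntegral_exp_neg_sq_le hx) (by positivity)
      _ = 1 := by field_simp
  · linarith [erf_nonneg (neg_nonneg.2 hx.le), erf_neg x]

lemma abs_erf_le_one (x : ℝ) : |erf x| ≤ 1 :=
  abs_le.2 ⟨by linarith [erf_le_one (-x), erf_neg x], erf_le_one x⟩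

lemma integral_gaussianReal_eq_integral_add {E : Type*} [NormedAddCommGroup E] [NormedSpace ℝ E]
    (f : ℝ → E) (μ : ℝ) (v : ℝ≥0) :
    ∫ x, f x ∂gaussianReal μ v = ∫ x, f (x + μ) ∂gaussianReal 0 v := by
  rw [← (measurableEmbedding_addRight μ).integral_map, gaussianReal_map_add_const, zero_add]

lemma Function.Odd.integral_gaussianReal_zero_eq_zero {E : Type*} [NormedAddCommGroup E]
    [NormedSpace ℝ E] {f : ℝ → E} (hf : f.Odd) (v : ℝ≥0) :
    ∫ x, f x ∂gaussianReal 0 v = 0 := by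
  have h : ∫ x, f x ∂gaussianReal 0 v = -∫ x, f x ∂gaussianReal 0 v :=
    calc ∫ x, f x ∂gaussianReal 0 v = ∫ x, f x ∂(gaussianReal 0 v).map (fun x => -x) := by
          rw [gaussianReal_map_neg, neg_zero]
      _ = ∫ x, f (-x) ∂gaussianReal 0 v :=
          (MeasurableEquiv.neg ℝ).measurableEmbedding.integral_map _
      _ = -∫ x, f x ∂gaussianReal 0 v := by simp only [hf _, integral_neg]
  have h2 : (2:ℝ) • ∫ x, f x ∂gaussianReal 0 v = 0 := by
    rw [two_smul]; exact eq_neg_iff_add_eq_zero.1 h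
  exact (smul_eq_zero.1 h2).resolve_left two_ne_zero

lemma exp_neg_sq_mul_exp_neg_sq {v : ℝ} (hv : 0 < v) (μ x : ℝ) :
    exp (-(x - μ) ^ 2 / (2 * v)) * exp (-x ^ 2)
      = exp (-μ ^ 2 / (1 + 2 * v))
        * exp (-((1 + 2 * v) / (2 * v)) * (x - μ / (1 + 2 * v)) ^ 2) := by
  rw [← exp_add, ← exp_add]
  congr 1
  field_simp
  ring

lemma integral_exp_neg_sq_gaussianReal (μ : ℝ) (v : ℝ≥0) :
    ∫ x, exp (-x ^ 2) ∂gaussianReal μ v = exp (-μ ^ 2 / (1 + 2 * v)) / √(1 + 2 * v) := by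
  rcases eq_or_ne v 0 with rfl | hv
  · simp [gaussianReal_zero_var]
  have hv' : (0:ℝ) < v := NNReal.coe_pos.2 (pos_iff_ne_zero.2 hv)
  simp_rw [integral_gaussianReal_eq_integral_smul hv, gaussianPDFReal, smul_eq_mul, mul_assoc,
    exp_neg_sq_mul_exp_neg_sq hv', ← mul_assoc, integral_const_mul,
    integral_sub_right_eq_self (fun x => exp (-((1 + 2 * v) / (2 * v)) * x ^ 2)), integral_gaussian]
  have hsqrt : √(π / ((1 + 2 * v) / (2 * v))) = √(2 * π * v) / √(1 + 2 * v) := by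
    rw [← sqrt_div' _ (by positivity)]
    congr 1
    field_simp
  rw [hsqrt]
  field_simp

lemma hasDerivAt_integral_comp_add {E : Type*} [NormedAddCommGroup E] [NormedSpace ℝ E]
    {ν : Measure ℝ} [IsFiniteMeasure ν] {f f' : ℝ → E} {C : ℝ}
    (hf : ∀ x, HasDerivAt f (f' x) x) (hf'_cont : Continuous f') (hf'_le : ∀ x, ‖f' x‖ ≤ C)
    {μ₀ : ℝ} (hint : Integrable (fun x => f (x + μ₀)) ν) :
    HasDerivAt (fun μ => ∫ x, f (x + μ) ∂ν) (∫ x, f' (x + μ₀) ∂ν) μ₀ := by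
  have hf_cont : Continuous f := continuous_iff_continuousAt.2 fun x => (hf x).continuousAt
  refine (hasDerivAt_integral_of_dominated_loc_of_deriv_le (F := fun μ x => f (x + μ))
    (bound := fun _ => C) Filter.univ_mem
    (.of_forall fun μ => (hf_cont.comp (continuous_add_const μ)).aestronglyMeasurable) hint
    (hf'_cont.comp (continuous_add_const μ₀)).aestronglyMeasurable
    (.of_forall fun x μ _ => hf'_le _) (integrable_const C)
    (.of_forall fun x μ _ => (hf (x + μ)).comp_const_add x μ)).2

lemma hasDerivAt_integral_erf_gaussianReal (v : ℝ≥0) (μ₀ : ℝ) :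
    HasDerivAt (fun μ => ∫ x, erf x ∂gaussianReal μ v)
      (2 / √π * (exp (-μ₀ ^ 2 / (1 + 2 * v)) / √(1 + 2 * v))) μ₀ := by
  have hderiv_le (x : ℝ) : ‖2 / √π * exp (-x ^ 2)‖ ≤ 2 / √π := by
    rw [norm_mul, norm_of_nonneg (by positivity), norm_of_nonneg (exp_pos _).le]
    exact mul_le_of_le_one_right (by positivity) (exp_le_one_iff.2 (by nlinarith))
  have hint : Integrable (fun x => erf (x + μ₀)) (gaussianReal 0 v) :=
    .of_bound (continuous_erf.comp (continuous_add_const μ₀)).aestronglyMeasurable 1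
      (.of_forall fun x => abs_erf_le_one _)
  simp_rw [integral_gaussianReal_eq_integral_add erf]
  refine (hasDerivAt_integral_comp_add hasDerivAt_erf (by fun_prop) hderiv_le hint).congr_deriv ?_
  rw [integral_const_mul, ← integral_gaussianReal_eq_integral_add (fun x => exp (-x ^ 2)),
    integral_exp_neg_sq_gaussianReal]

lemma hasDerivAt_erf_div {c : ℝ} (hc : 0 < c) (μ : ℝ) :
    HasDerivAt (fun μ => erf (μ / √c)) (2 / √π * (exp (-μ ^ 2 / c) / √c)) μ := by
  refine ((hasDerivAt_erf (μ / √c)).comp μ ((hasDerivAt_id' μ).div_const √c)).congr_deriv ?_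
  rw [div_pow, sq_sqrt hc.le, neg_div]
  ring

lemma integral_erf_gaussianReal (μ : ℝ) (v : ℝ≥0) :
    ∫ x, erf x ∂gaussianReal μ v = erf (μ / √(1 + 2 * v)) := by
  have hc : (0:ℝ) < 1 + 2 * v := by positivity
  have hodd : erf.Odd := erf_neg
  refine congrFun (eq_of_fderiv_eq (𝕜 := ℝ)
    (fun μ => (hasDerivAt_integral_erf_gaussianReal v μ).differentiableAt)
    (fun μ => (hasDerivAt_erf_div hc μ).differentiableAt)
    (fun μ => by rw [(hasDerivAt_integral_erf_gaussianReal v μ).hasFDerivAt.fderiv,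
      (hasDerivAt_erf_div hc μ).hasFDerivAt.fderiv]) 0 ?_) μ
  rw [hodd.integral_gaussianReal_zero_eq_zero, zero_div]
  simp [erf]

lemma gaussianReal_map_const_mul_add (μ : ℝ) (v : ℝ≥0) (a b : ℝ) :
    (gaussianReal μ v).map (fun x => a * x + b)
      = gaussianReal (a * μ + b) (.mk (a ^ 2) (sq_nonneg _) * v) := by
  have : (fun x => a * x + b) = (· + b) ∘ (a * ·) := rfl
  rw [this, ← Measure.map_map (measurable_add_const b) (measurable_const_mul a),
    gaussianReal_map_const_mul, gaussianReal_map_add_const]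

theorem integral_erf_gaussian_general (a b m s : ℝ) :
    ∫ x, erf (a * x + b) ∂(gaussianReal m (s ^ 2).toNNReal)
      = erf ((a * m + b) / Real.sqrt (1 + 2 * a ^ 2 * s ^ 2)) := by
  rw [← integral_map (by fun_prop) continuous_erf.aestronglyMeasurable,
    gaussianReal_map_const_mul_add, integral_erf_gaussianReal]
  simp [Real.coe_toNNReal _ (sq_nonneg s), mul_assoc]

/-- The Gaussian integral of the error function:
`∫ erf(a x + b) dN(m, s²)(x) = erf((a m + b)/√(1 + 2 a² s²))`. -/
theorem integral_erf_gaussian (a b m s : ℝ) (hs : 0 < s) :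
    ∫ x, erf (a * x + b) ∂(gaussianReal m (s ^ 2).toNNReal)
      = erf ((a * m + b) / Real.sqrt (1 + 2 * a ^ 2 * s ^ 2)) :=
  integral_erf_gaussian_general a b m s
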